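/- arXiv:2504.07852 — 4 statements merged into one kernel-verified Lean document; each statement's English description precedes it below -/
import Mathlib

section
/- If G is an n-vertex K_{r+1}-free simple graph (r ≥ 1), then its signless Laplacian spectral radius satisfies q(G) ≤ 2(1 − 1/r)·n. -/
open SimpleGraph Finset Matrix

def signlessLaplacian {V : Type*} [Fintype V] [DecidableEq V]
    (G : SimpleGraph V) [DecidableRel G.Adj] : Matrix V V ℝ :=
  Matrix.diagonal (fun v => (G.degree v : ℝ)) + G.adjMatrix ℝ

/-!
Let `y ≥ 0`, `y ≠ 0` satisfy `q • y ≤ Q y` entrywise (the absolute value of an eigenvector works,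
`Q` being nonnegative), and put `s = ∑ y`, `β = q - n`; we may assume `β > 0`. If `v` maximises `y`
on `S` and `A ⊆ S` contains `v` but no neighbour of `v`, the row of `q • y ≤ Q y` at `v` gives
`(β + #A) y v ≤ s - y(A)`, hence `y(A) ≤ s #A / (β + 2 #A)`. A `K_{m+1}`-free `S` splits into such
an `A` and `S ∩ N(v)`, which is `K_m`-free; by induction on `m`, `y(S) ≤ s m #S / (β m + 2 #S)`,
the step being the superadditivity of `(t, m) ↦ t m / (β m + 2 t)`. For `S = V` and `m = r` this
reads `β r + 2 n ≤ r n`.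
-/

theorem mul_div_add_mul_div_le_mul_div {α β a b c d : ℝ} (hα : 0 ≤ α) (hβ : 0 ≤ β)
    (h₁ : 0 < α * b + β * a) (h₂ : 0 < α * d + β * c) :
    a * b / (α * b + β * a) + c * d / (α * d + β * c) ≤
      (a + c) * (b + d) / (α * (b + d) + β * (a + c)) := by
  have h₃ : 0 < α * (b + d) + β * (a + c) := by linarith
  rw [div_add_div _ _ h₁.ne' h₂.ne', div_le_div_iff₀ (mul_pos h₁ h₂) h₃]
  have : 0 ≤ α * β * (a * d - b * c) ^ 2 := by positivity
  linear_combination this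

section NonnegMatrix

variable {n K : Type*} [Fintype n] [Field K] [LinearOrder K]
  [IsStrictOrderedRing K] {A : Matrix n n K}

theorem Matrix.abs_mulVec_le_mulVec_abs (hA : ∀ i j, 0 ≤ A i j) (x : n → K) :
    |A *ᵥ x| ≤ A *ᵥ |x| := fun i =>
  calc |(A *ᵥ x) i| ≤ ∑ j, |A i j * x j| := Finset.abs_sum_le_sum_abs _ _
    _ = (A *ᵥ |x|) i := by simp only [abs_mul, abs_of_nonneg (hA i _)]; rfl

theorem Matrix.exists_nonneg_smul_le_mulVec_of_mem_spectrum [DecidableEq n]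
    (hA : ∀ i j, 0 ≤ A i j) {q : K} (hq : q ∈ spectrum K A) : ∃ y : n → K, 0 ≤ y ∧ y ≠ 0 ∧ q • y ≤ A *ᵥ y := by
  rw [← Matrix.spectrum_toLin', ← Module.End.hasEigenvalue_iff_mem_spectrum] at hq
  obtain ⟨x, hx, hx0⟩ := hq.exists_hasEigenvector
  rw [Module.End.mem_eigenspace_iff, Matrix.toLin'_apply] at hx
  refine ⟨|x|, abs_nonneg x, by simpa using hx0, fun i => ?_⟩
  calc q * |x i| ≤ |q * x i| := by rw [abs_mul]; gcongr; exact le_abs_self q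
    _ = |A *ᵥ x| i := by rw [hx]; rfl
    _ ≤ (A *ᵥ |x|) i := abs_mulVec_le_mulVec_abs hA x i

end NonnegMatrix

section SignlessLaplacian

variable {V : Type*} [Fintype V] [DecidableEq V] (G : SimpleGraph V) [DecidableRel G.Adj]

theorem signlessLaplacian_nonneg (i j : V) : 0 ≤ signlessLaplacian G i j := by
  unfold signlessLaplacian
  rw [Matrix.add_apply, diagonal_apply, adjMatrix_apply]
  split_ifs <;> positivity

theorem signlessLaplacian_mulVec_apply (x : V → ℝ) (v : V) :
    (signlessLaplacian G *ᵥ x) v = G.degree v * x v + ∑ u ∈ G.neighborFinset v, x u := by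
  rw [signlessLaplacian, add_mulVec, Pi.add_apply, adjMatrix_mulVec_apply, mulVec_diagonal]

theorem signlessLaplacian_eq_zero_of_cliqueFree_two (h : G.CliqueFree 2) :
    signlessLaplacian G = 0 := by
  have hadj : ∀ u v, ¬ G.Adj u v := by simp [cliqueFree_two.1 h]
  ext i j
  simp [signlessLaplacian, adjMatrix_apply, hadj, ← card_neighborFinset_eq_degree,
    neighborFinset_eq_filter]

end SignlessLaplacian

section CliqueBound

variable {V : Type*} [Fintype V] [DecidableEq V] {G : SimpleGraph V} [DecidableRel G.Adj]
  {q : ℝ} {y : V → ℝ}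

theorem sum_le_of_forall_not_adj (hy : 0 ≤ y) (hqy : q • y ≤ signlessLaplacian G *ᵥ y)
    (hqn : (Fintype.card V : ℝ) < q) {A : Finset V} {v : V} (hv : v ∈ A)
    (hmax : ∀ w ∈ A, y w ≤ y v) (hA : ∀ w ∈ A, ¬ G.Adj v w) :
    ∑ w ∈ A, y w ≤ #A / (q - Fintype.card V + 2 * #A) * ∑ w, y w := by
  have hdisj : Disjoint (G.neighborFinset v) A :=
    Finset.disjoint_left.2 fun w hw hwA => hA w hwA ((G.mem_neighborFinset v w).1 hw)
  have hdeg : (G.degree v : ℝ) + #A ≤ Fintype.card V := by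
    rw [← card_neighborFinset_eq_degree, ← Nat.cast_add, ← card_union_of_disjoint hdisj]
    exact_mod_cast card_le_univ _
  have hnbr : ∑ w ∈ G.neighborFinset v, y w + ∑ w ∈ A, y w ≤ ∑ w, y w := by
    rw [← sum_union hdisj]
    exact sum_le_univ_sum_of_nonneg hy
  have hsum : ∑ w ∈ A, y w ≤ #A * y v := by
    simpa using sum_le_card_nsmul A y (y v) hmax
  have hv' := hqy v
  rw [Pi.smul_apply, smul_eq_mul, signlessLaplacian_mulVec_apply] at hv'
  have hA0 : (0 : ℝ) < #A := by exact_mod_cast card_pos.2 ⟨v, hv⟩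
  have hrow : (q - Fintype.card V + #A) * y v ≤ ∑ w, y w - ∑ w ∈ A, y w := by
    nlinarith [mul_le_mul_of_nonneg_right hdeg (hy v)]
  rw [div_mul_eq_mul_div, le_div_iff₀ (by linarith)]
  nlinarith [mul_le_mul_of_nonneg_right hsum (by linarith : 0 ≤ q - Fintype.card V + #A)]

theorem sum_le_of_cliqueFreeOn (hy : 0 ≤ y) (hqy : q • y ≤ signlessLaplacian G *ᵥ y)
    (hqn : (Fintype.card V : ℝ) < q) {m : ℕ} (hm : 1 ≤ m) {S : Finset V}
    (hS : G.CliqueFreeOn S (m + 1)) :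
    ∑ w ∈ S, y w ≤ #S * m / ((q - Fintype.card V) * m + 2 * #S) * ∑ w, y w := by
  induction m, hm using Nat.le_induction generalizing S with
  | base =>
    rcases S.eq_empty_or_nonempty with rfl | hSne
    · simp
    obtain ⟨v, hv, hmax⟩ := S.exists_max_image y hSne
    have hA : ∀ w ∈ S, ¬ G.Adj v w := fun w hw hvw =>
      (cliqueFreeOn_two G).1 hS hv hw (G.ne_of_adj hvw) hvw
    simpa using sum_le_of_forall_not_adj hy hqy hqn hv hmax hA
  | succ m hm ih =>
    rcases S.eq_empty_or_nonempty with rfl | hSne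
    · simp
    obtain ⟨v, hv, hmax⟩ := S.exists_max_image y hSne
    set S' := S.filter (G.Adj v)
    set A := S.filter (¬ G.Adj v ·)
    have hS' : G.CliqueFreeOn S' (m + 1) :=
      (hS.of_succ G hv).subset G fun w hw => by simpa [S'] using hw
    have hA : ∑ w ∈ A, y w ≤ #A * 1 / ((q - Fintype.card V) * 1 + 2 * #A) * ∑ w, y w := by
      simpa using sum_le_of_forall_not_adj hy hqy hqn (A := A) (by simp [A, hv])
        (fun w hw => hmax w (filter_subset _ _ hw)) (fun w hw => (mem_filter.1 hw).2)
    calc ∑ w ∈ S, y w = ∑ w ∈ S', y w + ∑ w ∈ A, y w :=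
          (sum_filter_add_sum_filter_not _ _ _).symm
      _ ≤ (#S' * m / ((q - Fintype.card V) * m + 2 * #S') +
            #A * 1 / ((q - Fintype.card V) * 1 + 2 * #A)) * ∑ w, y w := by
        rw [add_mul]; exact add_le_add (ih hS') hA
      _ ≤ (#S' + #A) * (m + 1) / ((q - Fintype.card V) * (m + 1) + 2 * (#S' + #A)) *
            ∑ w, y w := by
        gcongr
        · exact sum_nonneg fun w _ => hy w
        · exact mul_div_add_mul_div_le_mul_div (by linarith) zero_le_two
            (by positivity) (by positivity)
      _ = #S * ↑(m + 1) / ((q - Fintype.card V) * ↑(m + 1) + 2 * #S) * ∑ w, y w := by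
        rw [← card_filter_add_card_filter_not (s := S) (G.Adj v)]
        push_cast
        rfl

end CliqueBound

/-- If `G` is `K_{r+1}`-free on `n` vertices, then `q(G) ≤ 2 (1 − 1/r) n`. -/
theorem q_le_of_cliqueFree {V : Type*} [Fintype V] [DecidableEq V]
    (G : SimpleGraph V) [DecidableRel G.Adj] (r : ℕ) (hr : 1 ≤ r)
    (hfree : G.CliqueFree (r + 1)) (q : ℝ)
    (hq : IsGreatest (spectrum ℝ (signlessLaplacian G)) q) :
    q ≤ 2 * (1 - 1 / (r : ℝ)) * (Fintype.card V : ℝ) := by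
  obtain ⟨y, hy, hy0, hqy⟩ :=
    exists_nonneg_smul_le_mulVec_of_mem_spectrum (signlessLaplacian_nonneg G) hq.1
  have hs : 0 < ∑ v, y v := Fintype.sum_pos (hy.lt_of_ne (Ne.symm hy0))
  have hn : (0 : ℝ) ≤ Fintype.card V := by positivity
  rcases hr.eq_or_lt with rfl | hr2
  · have hqs : q * ∑ v, y v ≤ 0 := by
      rw [mul_sum]
      exact sum_nonpos fun v _ => by
        simpa [signlessLaplacian_eq_zero_of_cliqueFree_two G hfree] using hqy v
    simp only [Nat.cast_one, div_one, sub_self, mul_zero, zero_mul]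
    nlinarith
  by_cases hqn : q ≤ Fintype.card V
  · have hr2' : (1 : ℝ) / r ≤ 1 / 2 := one_div_le_one_div_of_le two_pos (by exact_mod_cast hr2)
    nlinarith
  push Not at hqn
  have key := sum_le_of_cliqueFreeOn hy hqy hqn hr (S := univ) (by simpa using hfree)
  have hr0 : (0 : ℝ) < r := by positivity
  rw [card_univ, le_mul_iff_one_le_left hs, one_le_div₀ (by nlinarith)] at key
  rw [show 2 * (1 - 1 / (r : ℝ)) * Fintype.card V =
    (2 * Fintype.card V * r - 2 * Fintype.card V) / r by field_simp, le_div_iff₀ hr0]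
  linarith
end

section
/- If G is an n-vertex K_{r+1}-free simple graph (r ≥ 1), then its adjacency spectral radius satisfies λ(G) ≤ (1 − 1/r)·n. -/
/-!
For an eigenvector `x` of `λ`, `λ ‖x‖² = xᵀAx ≤ ∑_{u ~ w} |x u| |x w|`. The right-hand side is
bounded by the Motzkin–Straus inequality: for a `K_{r+1}`-free graph and nonnegative weights `y`,
`∑_u y u ∑_{w ~ u} y w ≤ (1 - 1/r) (∑ y)²`. This is proved by induction on `r`, splitting off the
neighbourhood of a vertex of maximal weighted degree, which is `K_r`-free. Cauchy–Schwarz,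
`(∑ |x u|)² ≤ n ‖x‖²`, finishes the proof.
-/

open SimpleGraph Finset Matrix

theorem one_sub_one_div_mul_sq_add_two_mul_le {r : ℝ} (hr : 0 < r) (a b : ℝ) :
    (1 - 1 / r) * a ^ 2 + 2 * a * b ≤ (1 - 1 / (r + 1)) * (a + b) ^ 2 := by
  have hgap : (1 - 1 / (r + 1)) * (a + b) ^ 2 - ((1 - 1 / r) * a ^ 2 + 2 * a * b)
      = (a - r * b) ^ 2 / (r * (r + 1)) := by
    field_simp
    ring
  linarith [hgap ▸ (by positivity : 0 ≤ (a - r * b) ^ 2 / (r * (r + 1)))]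

theorem Matrix.exists_mulVec_eq_smul_of_mem_spectrum {K n : Type*} [Field K] [Fintype n]
    [DecidableEq n] {A : Matrix n n K} {μ : K} (hμ : μ ∈ spectrum K A) :
    ∃ x ≠ 0, A *ᵥ x = μ • x := by
  rw [← spectrum_toLin'] at hμ
  obtain ⟨x, hx⟩ := (Module.End.HasEigenvalue.of_mem_spectrum hμ).exists_hasEigenvector
  exact ⟨x, hx.2, by simpa using hx.apply_eq_smul⟩

theorem Matrix.sq_sum_abs_le_card_mul_dotProduct_self {n : Type*} [Fintype n] (x : n → ℝ) :
    (∑ i, |x i|) ^ 2 ≤ Fintype.card n * (x ⬝ᵥ x) := by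
  simpa [dotProduct, ← sq, sq_abs] using sq_sum_le_card_mul_sum_sq (s := univ) (f := fun i => |x i|)

namespace SimpleGraph

section LocallyFinite

variable {V : Type*} [DecidableEq V] (G : SimpleGraph V) [G.LocallyFinite]

/-- Twice the Lagrangian `∑_{uw ∈ E(G[s])} y u * y w` of the weighting `y` of `s`. -/
def adjFormOn (s : Finset V) (y : V → ℝ) : ℝ :=
  ∑ u ∈ s, y u * ∑ w ∈ s ∩ G.neighborFinset u, y w

variable {G}

theorem adjFormOn_empty (y : V → ℝ) : G.adjFormOn ∅ y = 0 := by
  simp [adjFormOn]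

theorem adjFormOn_eq_zero_of_cliqueFreeOn_two {s : Finset V} (hs : G.CliqueFreeOn s 2)
    (y : V → ℝ) : G.adjFormOn s y = 0 := by
  refine sum_eq_zero fun u hu => ?_
  suffices s ∩ G.neighborFinset u = ∅ by simp [this]
  refine eq_empty_of_forall_notMem fun w hw => ?_
  rw [mem_inter, mem_neighborFinset] at hw
  exact (G.cliqueFreeOn_two.1 hs) hu hw.1 hw.2.ne hw.2

theorem adjFormOn_le_add_two_mul {s t : Finset V} {y : V → ℝ} (hts : t ⊆ s)
    (hy : ∀ u ∈ s, 0 ≤ y u)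
    (hmax : ∀ u ∈ s \ t, ∑ w ∈ s ∩ G.neighborFinset u, y w ≤ ∑ w ∈ t, y w) :
    G.adjFormOn s y ≤ G.adjFormOn t y + 2 * (∑ u ∈ t, y u) * ∑ u ∈ s \ t, y u := by
  have hinner (u : V) : ∑ w ∈ s ∩ G.neighborFinset u, y w
      ≤ ∑ w ∈ t ∩ G.neighborFinset u, y w + ∑ w ∈ s \ t, y w := by
    have hinter : s ∩ G.neighborFinset u ∩ t = t ∩ G.neighborFinset u := by
      rw [inter_right_comm, inter_eq_right.2 hts]
    rw [← sum_inter_add_sum_sdiff (s ∩ G.neighborFinset u) t, hinter]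
    exact add_le_add_right (sum_le_sum_of_subset_of_nonneg
      (sdiff_subset_sdiff inter_subset_left le_rfl) fun w hw _ => hy w (mem_sdiff.1 hw).1) _
  have hin : ∑ u ∈ t, y u * ∑ w ∈ s ∩ G.neighborFinset u, y w
      ≤ G.adjFormOn t y + (∑ u ∈ t, y u) * ∑ u ∈ s \ t, y u := by
    calc _ ≤ ∑ u ∈ t, y u * (∑ w ∈ t ∩ G.neighborFinset u, y w + ∑ w ∈ s \ t, y w) :=
          sum_le_sum fun u hu => mul_le_mul_of_nonneg_left (hinner u) (hy u (hts hu))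
      _ = _ := by simp only [mul_add, sum_add_distrib, adjFormOn, sum_mul]
  have hout : ∑ u ∈ s \ t, y u * ∑ w ∈ s ∩ G.neighborFinset u, y w
      ≤ (∑ u ∈ s \ t, y u) * ∑ u ∈ t, y u := by
    rw [sum_mul]
    exact sum_le_sum fun u hu => mul_le_mul_of_nonneg_left (hmax u hu) (hy u (mem_sdiff.1 hu).1)
  rw [adjFormOn, ← sum_sdiff hts]
  linarith

theorem adjFormOn_le_of_cliqueFreeOn {r : ℕ} (hr : 1 ≤ r) {s : Finset V}
    (hs : G.CliqueFreeOn s (r + 1)) {y : V → ℝ} (hy : ∀ u ∈ s, 0 ≤ y u) :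
    G.adjFormOn s y ≤ (1 - 1 / (r : ℝ)) * (∑ u ∈ s, y u) ^ 2 := by
  induction r, hr using Nat.le_induction generalizing s with
  | base => simp [adjFormOn_eq_zero_of_cliqueFreeOn_two hs]
  | succ r hr ih =>
    rcases s.eq_empty_or_nonempty with rfl | hne
    · simp [adjFormOn_empty]
    obtain ⟨v, hv, hvmax⟩ := exists_max_image s (fun u => ∑ w ∈ s ∩ G.neighborFinset u, y w) hne
    set t := s ∩ G.neighborFinset v
    have hts : t ⊆ s := inter_subset_left
    have ht : G.CliqueFreeOn t (r + 1) := by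
      simpa [t, coe_neighborFinset] using CliqueFreeOn.of_succ G hs hv
    have hsplit := adjFormOn_le_add_two_mul hts hy fun u hu => hvmax u (mem_sdiff.1 hu).1
    have hrec := ih ht fun u hu => hy u (hts hu)
    have halg := one_sub_one_div_mul_sq_add_two_mul_le (r := r) (by positivity)
      (∑ u ∈ t, y u) (∑ u ∈ s \ t, y u)
    rw [← sum_sdiff hts]
    push_cast
    linarith

end LocallyFinite

theorem dotProduct_adjMatrix_mulVec_le_adjFormOn_abs {V : Type*} [Fintype V] [DecidableEq V]
    (G : SimpleGraph V) [DecidableRel G.Adj] (x : V → ℝ) :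
    x ⬝ᵥ (G.adjMatrix ℝ *ᵥ x) ≤ G.adjFormOn univ fun u => |x u| := by
  simp only [adjFormOn, dotProduct, adjMatrix_mulVec_apply, univ_inter]
  refine sum_le_sum fun u _ => ?_
  calc x u * ∑ w ∈ G.neighborFinset u, x w
      ≤ |x u| * |∑ w ∈ G.neighborFinset u, x w| := (le_abs_self _).trans (abs_mul _ _).le
    _ ≤ |x u| * ∑ w ∈ G.neighborFinset u, |x w| := by gcongr; exact abs_sum_le_sum_abs _ _

end SimpleGraph

/-- Wilf's bound: if `G` is `K_{r+1}`-free on `n` vertices, then `λ(G) ≤ (1 − 1/r) n`. -/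
theorem adjSpectralRadius_le_of_cliqueFree {V : Type*} [Fintype V] [DecidableEq V]
    (G : SimpleGraph V) [DecidableRel G.Adj] (r : ℕ) (hr : 1 ≤ r)
    (hfree : G.CliqueFree (r + 1)) (lam : ℝ)
    (hlam : IsGreatest (spectrum ℝ (G.adjMatrix ℝ)) lam) :
    lam ≤ (1 - 1 / (r : ℝ)) * (Fintype.card V : ℝ) := by
  obtain ⟨x, hx0, hx⟩ := exists_mulVec_eq_smul_of_mem_spectrum hlam.1
  have hpos : 0 < x ⬝ᵥ x :=
    (sum_nonneg fun u _ => mul_self_nonneg (x u)).lt_of_ne' (dotProduct_self_eq_zero.not.2 hx0)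
  have hcoef : 0 ≤ 1 - 1 / (r : ℝ) :=
    sub_nonneg.2 (div_le_one_of_le₀ (by exact_mod_cast hr) (by positivity))
  refine le_of_mul_le_mul_right ?_ hpos
  calc lam * (x ⬝ᵥ x) = x ⬝ᵥ (G.adjMatrix ℝ *ᵥ x) := by rw [hx, dotProduct_smul, smul_eq_mul]
    _ ≤ G.adjFormOn univ fun u => |x u| := G.dotProduct_adjMatrix_mulVec_le_adjFormOn_abs x
    _ ≤ (1 - 1 / (r : ℝ)) * (∑ u, |x u|) ^ 2 :=
        adjFormOn_le_of_cliqueFreeOn hr hfree.cliqueFreeOn fun u _ => abs_nonneg (x u)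
    _ ≤ (1 - 1 / (r : ℝ)) * (Fintype.card V * (x ⬝ᵥ x)) :=
        mul_le_mul_of_nonneg_left (sq_sum_abs_le_card_mul_dotProduct_self x) hcoef
    _ = (1 - 1 / (r : ℝ)) * Fintype.card V * (x ⬝ᵥ x) := by ring
end

section
/- If G is a K_{r+1}-free simple graph on n vertices with m edges (r ≥ 1), then ∑_{v ∈ V(G)} d(v)² ≤ 2(1 − 1/r)·m·n. -/
/-!
The neighbourhood of a vertex `u` spans a `K_r`-free graph, so by Turán's theorem it carries at
most `(1 - 1/(r-1)) d(u)² / 2` edges. Counting edges leaving the neighbourhood then gives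
`∑_{v ∼ u} d(v) ≤ d(u) n - d(u)² / (r - 1)`. Summing over `u`, the left side becomes `∑_v d(v)²`
and the right side `2mn - ∑_u d(u)² / (r - 1)`, which rearranges to the claim.
-/

open SimpleGraph Finset

namespace SimpleGraph

variable {V : Type*} [Fintype V] {G : SimpleGraph V} [DecidableRel G.Adj]

/-- Turán's bound `2e ≤ (1 - 1/r) n²` with the denominator cleared; for `r = 0` it says `n = 0`. -/
theorem CliqueFree.two_mul_mul_card_edgeFinset_add_sq_le {r : ℕ} (hG : G.CliqueFree (r + 1)) :
    2 * r * #G.edgeFinset + Fintype.card V ^ 2 ≤ r * Fintype.card V ^ 2 := by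
  rcases r.eq_zero_or_pos with rfl | hr
  · rw [cliqueFree_one, ← Fintype.card_eq_zero_iff] at hG
    simp [hG]
  obtain ⟨H, _, hH⟩ := exists_isTuranMaximal (V := V) hr
  have hturan : 2 * r * #G.edgeFinset ≤ (r - 1) * Fintype.card V ^ 2 := by
    grw [hH.2 hG, ((isTuranMaximal_iff_nonempty_iso_turanGraph hr).mp hH).some.card_edgeFinset_eq]
    exact mul_card_edgeFinset_turanGraph_le
  obtain ⟨k, rfl⟩ := Nat.exists_eq_add_of_lt hr
  simp only [zero_add, add_tsub_cancel_right] at hturan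
  nlinarith

theorem sum_sum_degree_neighborFinset :
    ∑ u, ∑ v ∈ G.neighborFinset u, G.degree v = ∑ v, G.degree v ^ 2 := by
  rw [Finset.sum_comm' (t := fun u => G.neighborFinset u) (t' := univ)
    (s' := fun v => G.neighborFinset v) (by simp [adj_comm])]
  simp [sq, card_neighborFinset_eq_degree]

variable [DecidableEq V]

theorem sum_card_neighborFinset_inter_eq (s : Finset V) :
    ∑ v ∈ s, #(G.neighborFinset v ∩ s) = 2 * #(G.induce (s : Set V)).edgeFinset := by
  rw [← sum_degrees_eq_twice_card_edges, ← Finset.sum_coe_sort s]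
  refine Fintype.sum_congr _ _ fun v => ?_
  rw [← card_neighborFinset_eq_degree, ← card_map (.subtype (· ∈ (s : Set V)))]
  congr 1
  ext w
  simp [and_comm]

theorem degree_add_card_le (t : Finset V) (v : V) :
    G.degree v + #t ≤ #(G.neighborFinset v ∩ t) + Fintype.card V := by
  rw [← card_neighborFinset_eq_degree, ← card_inter_add_card_sdiff _ t, add_assoc,
    card_sdiff_add_card]
  exact Nat.add_le_add_left (card_le_univ _) _

theorem CliqueFree.mul_sum_degree_neighborFinset_add_sq_le {r : ℕ} (hG : G.CliqueFree (r + 2))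
    (u : V) : r * ∑ v ∈ G.neighborFinset u, G.degree v + G.degree u ^ 2 ≤
      r * G.degree u * Fintype.card V := by
  set t := G.neighborFinset u
  have hfree : (G.induce (t : Set V)).CliqueFree (r + 1) := by
    rw [cliqueFree_induce_iff]
    simpa [t] using CliqueFreeOn.of_succ G hG.cliqueFreeOn (Set.mem_univ u)
  have hturan := hfree.two_mul_mul_card_edgeFinset_add_sq_le
  simp only [Finset.coe_sort_coe, Fintype.card_coe] at hturan
  rw [mul_right_comm, ← sum_card_neighborFinset_inter_eq] at hturan
  have hsplit : ∑ v ∈ t, G.degree v + #t * #t ≤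
      ∑ v ∈ t, #(G.neighborFinset v ∩ t) + #t * Fintype.card V := by
    simpa [sum_add_distrib] using sum_le_sum fun v (_ : v ∈ t) => G.degree_add_card_le t v
  rw [← card_neighborFinset_eq_degree]
  nlinarith

theorem CliqueFree.succ_mul_sum_degree_sq_le {r : ℕ} (hG : G.CliqueFree (r + 2)) :
    (r + 1) * ∑ v, G.degree v ^ 2 ≤ 2 * r * #G.edgeFinset * Fintype.card V := by
  have := sum_le_sum fun u (_ : u ∈ univ) => hG.mul_sum_degree_neighborFinset_add_sq_le u
  rw [sum_add_distrib, ← mul_sum, sum_sum_degree_neighborFinset, ← sum_mul, ← mul_sum,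
    sum_degrees_eq_twice_card_edges] at this
  linarith

end SimpleGraph

/-- Nikiforov–Rousseau: if `G` is `K_{r+1}`-free on `n` vertices with `m` edges,
then `∑_v d(v)² ≤ 2 (1 − 1/r) m n`. -/
theorem sum_sq_degrees_le_of_cliqueFree {V : Type*} [Fintype V] [DecidableEq V]
    (G : SimpleGraph V) [DecidableRel G.Adj] (r : ℕ) (hr : 1 ≤ r)
    (hfree : G.CliqueFree (r + 1)) :
    ∑ v, (G.degree v : ℝ) ^ 2 ≤
      2 * (1 - 1 / (r : ℝ)) * (G.edgeFinset.card : ℝ) * (Fintype.card V : ℝ) := by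
  obtain ⟨k, rfl⟩ := Nat.exists_eq_add_of_le' hr
  have hbound : ((k + 1 : ℕ) : ℝ) * ∑ v, (G.degree v : ℝ) ^ 2 ≤
      2 * k * #G.edgeFinset * Fintype.card V := by
    exact_mod_cast hfree.succ_mul_sum_degree_sq_le
  have hk : (0 : ℝ) < (k + 1 : ℕ) := by positivity
  rw [← le_div_iff₀' hk] at hbound
  refine hbound.trans_eq ?_
  push_cast
  field_simp
  ring
end

section
/- For any simple graph G on n vertices with m edges, the adjacency spectral radius satisfies λ(G)² ≥ (1/n)·∑_{v ∈ V(G)} d(v)² (Hofmeister's inequality). -/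
/-!
Let `A` be the adjacency matrix and `𝟙` the all-ones vector, so that `A𝟙` is the degree vector.
Expanding in an orthonormal eigenbasis of the symmetric matrix `A` gives
`∑ d(v)² = ‖A𝟙‖² ≤ (max |μ|)² ‖𝟙‖² = (max |μ|)² n`. As `A` has nonnegative entries, an eigenvector
`v` for an eigenvalue `μ` gives `-μ ‖v‖² = -⟪v, Av⟫ ≤ ⟪|v|, A|v|⟫ ≤ λ ‖v‖²`, so `max |μ| = λ`.
-/

open SimpleGraph Finset Matrix

open scoped RealInnerProductSpace

namespace LinearMap.IsSymmetric

variable {E : Type*} [NormedAddCommGroup E] [InnerProductSpace ℝ E] [FiniteDimensional ℝ E]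
  {T : E →ₗ[ℝ] E}

theorem inner_apply_self_le (hT : T.IsSymmetric) {c : ℝ}
    (hc : ∀ μ, Module.End.HasEigenvalue T μ → μ ≤ c) (x : E) : ⟪T x, x⟫ ≤ c * ‖x‖ ^ 2 := by
  let b := hT.eigenvectorBasis rfl
  calc ⟪T x, x⟫ = ∑ i, hT.eigenvalues rfl i * b.repr x i ^ 2 := by
        simp only [← b.repr.inner_map_map, PiLp.inner_apply, b,
          hT.eigenvectorBasis_apply_self_apply]
        simp [sq, mul_left_comm]
    _ ≤ ∑ i, c * b.repr x i ^ 2 := by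
        gcongr with i
        exact hc _ (hT.hasEigenvalue_eigenvalues rfl i)
    _ = c * ‖x‖ ^ 2 := by
        rw [← mul_sum, ← b.repr.norm_map, EuclideanSpace.norm_sq_eq]
        simp

theorem norm_apply_sq_le (hT : T.IsSymmetric) {c : ℝ}
    (hc : ∀ μ, Module.End.HasEigenvalue T μ → |μ| ≤ c) (x : E) :
    ‖T x‖ ^ 2 ≤ c ^ 2 * ‖x‖ ^ 2 := by
  let b := hT.eigenvectorBasis rfl
  calc ‖T x‖ ^ 2 = ∑ i, hT.eigenvalues rfl i ^ 2 * b.repr x i ^ 2 := by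
        simp only [← b.repr.norm_map, EuclideanSpace.norm_sq_eq, b,
          hT.eigenvectorBasis_apply_self_apply]
        simp [mul_pow]
    _ ≤ ∑ i, c ^ 2 * b.repr x i ^ 2 := by
        gcongr ∑ i, ?_ * _ with i
        rw [← sq_abs]
        exact pow_le_pow_left₀ (abs_nonneg _) (hc _ (hT.hasEigenvalue_eigenvalues rfl i)) 2
    _ = c ^ 2 * ‖x‖ ^ 2 := by
        rw [← mul_sum, ← b.repr.norm_map, EuclideanSpace.norm_sq_eq]
        simp

end LinearMap.IsSymmetric

namespace Matrix

theorem abs_dotProduct_mulVec_le {n R : Type*} [Fintype n] [CommRing R] [LinearOrder R]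
    [IsStrictOrderedRing R] {A : Matrix n n R} (hA : ∀ i j, 0 ≤ A i j) (x y : n → R) :
    |x ⬝ᵥ A *ᵥ y| ≤ |x| ⬝ᵥ A *ᵥ |y| := by
  simp only [dotProduct, mulVec, mul_sum, Pi.abs_apply]
  refine (abs_sum_le_sum_abs _ _).trans (sum_le_sum fun i _ => ?_)
  refine (abs_sum_le_sum_abs _ _).trans_eq (sum_congr rfl fun j _ => ?_)
  rw [abs_mul, abs_mul, abs_of_nonneg (hA i j)]

variable {n : Type*} [Fintype n] [DecidableEq n]

theorem hasEigenvalue_toEuclideanLin_iff {𝕜 : Type*} [RCLike 𝕜] {A : Matrix n n 𝕜} {μ : 𝕜} :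
    Module.End.HasEigenvalue (toEuclideanLin A) μ ↔ μ ∈ spectrum 𝕜 A := by
  rw [Module.End.hasEigenvalue_iff_mem_spectrum, spectrum_toLpLin]

namespace IsHermitian

variable {A : Matrix n n ℝ}

theorem dotProduct_mulVec_self_le (hA : A.IsHermitian) {c : ℝ} (hc : ∀ μ ∈ spectrum ℝ A, μ ≤ c)
    (x : n → ℝ) : x ⬝ᵥ A *ᵥ x ≤ c * (x ⬝ᵥ x) := by
  have := (isSymmetric_toEuclideanLin_iff.mpr hA).inner_apply_self_le
    (fun μ hμ => hc μ (hasEigenvalue_toEuclideanLin_iff.mp hμ)) (WithLp.toLp 2 x)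
  rwa [← real_inner_self_eq_norm_sq, toLpLin_toLp, toLin'_apply, EuclideanSpace.inner_toLp_toLp,
    EuclideanSpace.inner_toLp_toLp, star_trivial, star_trivial] at this

theorem mulVec_dotProduct_mulVec_le (hA : A.IsHermitian) {c : ℝ}
    (hc : ∀ μ ∈ spectrum ℝ A, |μ| ≤ c) (x : n → ℝ) :
    A *ᵥ x ⬝ᵥ A *ᵥ x ≤ c ^ 2 * (x ⬝ᵥ x) := by
  have := (isSymmetric_toEuclideanLin_iff.mpr hA).norm_apply_sq_le
    (fun μ hμ => hc μ (hasEigenvalue_toEuclideanLin_iff.mp hμ)) (WithLp.toLp 2 x)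
  rwa [← real_inner_self_eq_norm_sq, ← real_inner_self_eq_norm_sq, toLpLin_toLp, toLin'_apply,
    EuclideanSpace.inner_toLp_toLp, EuclideanSpace.inner_toLp_toLp, star_trivial,
    star_trivial] at this

theorem abs_le_of_isGreatest_spectrum (hA : A.IsHermitian) (hA₀ : ∀ i j, 0 ≤ A i j) {lam : ℝ}
    (hlam : IsGreatest (spectrum ℝ A) lam) {μ : ℝ} (hμ : μ ∈ spectrum ℝ A) : |μ| ≤ lam := by
  obtain ⟨v, hv, hv₀⟩ := (hasEigenvalue_toEuclideanLin_iff.mpr hμ).exists_hasEigenvector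
  set w := v.ofLp
  have hAw : A *ᵥ w = μ • w := congrArg WithLp.ofLp (Module.End.mem_eigenspace_iff.mp hv)
  have hw : 0 < w ⬝ᵥ w := by
    simpa only [EuclideanSpace.inner_eq_star_dotProduct, star_trivial] using
      (real_inner_self_pos.mpr hv₀ : 0 < ⟪v, v⟫)
  have : -(μ * (w ⬝ᵥ w)) ≤ lam * (w ⬝ᵥ w) := calc
    -(μ * (w ⬝ᵥ w)) = -(w ⬝ᵥ A *ᵥ w) := by rw [hAw, dotProduct_smul, smul_eq_mul]
    _ ≤ |w| ⬝ᵥ A *ᵥ |w| := (neg_le_abs _).trans (abs_dotProduct_mulVec_le hA₀ _ _)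
    _ ≤ lam * (|w| ⬝ᵥ |w|) := hA.dotProduct_mulVec_self_le (fun _ h => hlam.2 h) _
    _ = lam * (w ⬝ᵥ w) := by simp [dotProduct, abs_mul_abs_self]
  exact abs_le.mpr ⟨by nlinarith, hlam.2 hμ⟩

end IsHermitian

end Matrix

theorem hofmeister_general {V : Type*} [Fintype V] [DecidableEq V]
    (G : SimpleGraph V) [DecidableRel G.Adj] (lam : ℝ)
    (hlam : IsGreatest (spectrum ℝ (G.adjMatrix ℝ)) lam) :
    (1 / (Fintype.card V : ℝ)) * ∑ v, (G.degree v : ℝ) ^ 2 ≤ lam ^ 2 := by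
  have hA : (G.adjMatrix ℝ).IsHermitian := isHermitian_iff_isSymm.mpr G.isSymm_adjMatrix
  have hA₀ : ∀ i j, 0 ≤ G.adjMatrix ℝ i j := fun i j => by
    simp only [adjMatrix_apply]
    positivity
  have key := hA.mulVec_dotProduct_mulVec_le
    (fun _ hμ => hA.abs_le_of_isGreatest_spectrum hA₀ hlam hμ) 1
  have hdeg : G.adjMatrix ℝ *ᵥ 1 ⬝ᵥ G.adjMatrix ℝ *ᵥ 1 = ∑ v, (G.degree v : ℝ) ^ 2 := by
    simp [dotProduct, sq]
  have hcard : (1 : V → ℝ) ⬝ᵥ 1 = Fintype.card V := by simp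
  rw [hdeg, hcard] at key
  calc (1 / (Fintype.card V : ℝ)) * ∑ v, (G.degree v : ℝ) ^ 2
      ≤ (1 / (Fintype.card V : ℝ)) * (lam ^ 2 * Fintype.card V) := by gcongr
    _ = lam ^ 2 * (Fintype.card V / Fintype.card V) := by ring
    _ ≤ lam ^ 2 := mul_le_of_le_one_right (sq_nonneg _) (div_self_le_one _)

/-- Hofmeister's inequality: `λ(G)² ≥ (1/n) ∑_v d(v)²`. -/
theorem hofmeister {V : Type*} [Fintype V] [DecidableEq V]
    (G : SimpleGraph V) [DecidableRel G.Adj] (hn : 1 ≤ Fintype.card V) (lam : ℝ)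
    (hlam : IsGreatest (spectrum ℝ (G.adjMatrix ℝ)) lam) :
    (1 / (Fintype.card V : ℝ)) * ∑ v, (G.degree v : ℝ) ^ 2 ≤ lam ^ 2 :=
  hofmeister_general G lam hlam
end
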